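/- Let α > 0. Any function u : [0,1] → ℝ (no measurability or regularity assumed) satisfying u(1-x) + (1-x)^α · u(y/(1-x)) = u(y) + (1-y)^α · u((1-x-y)/(1-y)) for all x, y ∈ [0,1) with x + y ≤ 1 satisfies u(x) = u(1-x) for every rational number x ∈ [0,1]. -/

import Mathlib

/-!
Write `D x = u x - u (1 - x)`. Symmetrising the functional equation in `x` and `y` gives
`D x + D y = (1 - x)^α D (y / (1 - x)) + (1 - y)^α D (x / (1 - y))`, and at `x = y` this reads
`D x = (1 - x)^α D (x / (1 - x))`. For `x = p / n` with `2p ≤ n` the right-hand point is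
`p / (n - p)`, a fraction with smaller denominator, while `D (1 - x) = -D x` covers `2p > n`.
Strong induction on the denominator, started from `D 0 = 0` (the equation at `x = y = 1/2`),
gives `D = 0` on all rationals of `[0, 1]`.
-/

def FundamentalEquation (α : ℝ) (u : ℝ → ℝ) : Prop :=
  ∀ x y : ℝ, 0 ≤ x → x < 1 → 0 ≤ y → y < 1 → x + y ≤ 1 →
    u (1 - x) + (1 - x) ^ α * u (y / (1 - x)) = u y + (1 - y) ^ α * u ((1 - x - y) / (1 - y))

def symmDefect (u : ℝ → ℝ) (x : ℝ) : ℝ := u x - u (1 - x)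

lemma symmDefect_one_sub (u : ℝ → ℝ) (x : ℝ) : symmDefect u (1 - x) = -symmDefect u x := by
  simp only [symmDefect, sub_sub_cancel, neg_sub]

namespace FundamentalEquation

variable {α : ℝ} {u : ℝ → ℝ}

lemma symmDefect_zero (hu : FundamentalEquation α u) : symmDefect u 0 = 0 := by
  have h := hu (1 / 2) (1 / 2) (by norm_num) (by norm_num) (by norm_num) (by norm_num)
    (by norm_num)
  have hpos : (1 / 2 : ℝ) ^ α ≠ 0 := by positivity
  norm_num at h
  simp [symmDefect, h.resolve_right hpos]

lemma symmDefect_add_symmDefect (hu : FundamentalEquation α u) {x y : ℝ} (hx : 0 ≤ x)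
    (hx1 : x < 1) (hy : 0 ≤ y) (hy1 : y < 1) (hxy : x + y ≤ 1) :
    symmDefect u x + symmDefect u y
      = (1 - x) ^ α * symmDefect u (y / (1 - x)) + (1 - y) ^ α * symmDefect u (x / (1 - y)) := by
  have hx0 : 1 - x ≠ 0 := by linarith
  have hy0 : 1 - y ≠ 0 := by linarith
  have hxy' := hu x y hx hx1 hy hy1 hxy
  have hyx := hu y x hy hy1 hx hx1 (by linarith)
  rw [show (1 - x - y) / (1 - y) = 1 - x / (1 - y) by field_simp; ring] at hxy'
  rw [show (1 - y - x) / (1 - x) = 1 - y / (1 - x) by field_simp; ring] at hyx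
  simp only [symmDefect]
  linear_combination -hxy' - hyx

lemma symmDefect_eq_mul_symmDefect_div (hu : FundamentalEquation α u) {x : ℝ} (hx : 0 ≤ x)
    (hx2 : 2 * x ≤ 1) : symmDefect u x = (1 - x) ^ α * symmDefect u (x / (1 - x)) := by
  have h := hu.symmDefect_add_symmDefect hx (by linarith) hx (by linarith) (by linarith)
  linarith

lemma symmDefect_natCast_div_eq_zero (hu : FundamentalEquation α u) (n : ℕ) :
    ∀ p : ℕ, p ≤ n → symmDefect u (p / n) = 0 := by
  induction n using Nat.strong_induction_on with
  | _ n ih =>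
  have small : ∀ p : ℕ, 2 * p ≤ n → symmDefect u (p / n) = 0 := by
    intro p h2p
    rcases Nat.eq_zero_or_pos p with rfl | hp
    · simpa using hu.symmDefect_zero
    have hn : (0 : ℝ) < n := by exact_mod_cast (show 0 < n by omega)
    have hnp : ((n - p : ℕ) : ℝ) = n - p := Nat.cast_sub (by omega)
    have hpn : (p : ℝ) < n := by exact_mod_cast (show p < n by omega)
    have hdiv : (p / n : ℝ) / (1 - p / n) = p / (n - p : ℕ) := by
      rw [hnp]
      field_simp
    have h2x : 2 * (p / n : ℝ) ≤ 1 := by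
      rw [← mul_div_assoc, div_le_one hn]
      exact_mod_cast h2p
    rw [hu.symmDefect_eq_mul_symmDefect_div (by positivity) h2x, hdiv,
      ih (n - p) (by omega) p (by omega), mul_zero]
  intro p hpn
  rcases le_or_gt (2 * p) n with h2p | h2p
  · exact small p h2p
  · have hn : (n : ℝ) ≠ 0 := by exact_mod_cast (show n ≠ 0 by omega)
    have hflip : (p / n : ℝ) = 1 - (n - p : ℕ) / n := by
      rw [Nat.cast_sub hpn]
      field_simp
      ring
    rw [hflip, symmDefect_one_sub, small (n - p) (by omega), neg_zero]

end FundamentalEquation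

theorem stmt4_general (α : ℝ) (u : ℝ → ℝ)
    (heq : ∀ x y : ℝ, 0 ≤ x → x < 1 → 0 ≤ y → y < 1 → x + y ≤ 1 →
      u (1 - x) + (1 - x) ^ α * u (y / (1 - x))
        = u y + (1 - y) ^ α * u ((1 - x - y) / (1 - y))) :
    ∀ q : ℚ, 0 ≤ (q : ℝ) → (q : ℝ) ≤ 1 → u (q : ℝ) = u (1 - (q : ℝ)) := by
  have hu : FundamentalEquation α u := heq
  intro q hq0 hq1
  obtain ⟨p, hp⟩ := Int.eq_ofNat_of_zero_le (Rat.num_nonneg.mpr (by exact_mod_cast hq0))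
  have hq : (q : ℝ) = p / q.den := by
    rw [Rat.cast_def, hp, Int.cast_natCast]
  have hpden : p ≤ q.den := by
    rw [hq, div_le_one (by positivity)] at hq1
    exact_mod_cast hq1
  have h := hu.symmDefect_natCast_div_eq_zero q.den p hpden
  rw [← hq] at h
  exact sub_eq_zero.mp h

/-- For `α > 0`, any solution `u : [0,1] → ℝ` of the fundamental functional equation
(no measurability assumed) satisfies `u(x) = u(1-x)` for all rational `x ∈ [0,1]`. -/
theorem stmt4 (α : ℝ) (hα : 0 < α) (u : ℝ → ℝ)
    (heq : ∀ x y : ℝ, 0 ≤ x → x < 1 → 0 ≤ y → y < 1 → x + y ≤ 1 →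
      u (1 - x) + (1 - x) ^ α * u (y / (1 - x))
        = u y + (1 - y) ^ α * u ((1 - x - y) / (1 - y))) :
    ∀ q : ℚ, 0 ≤ (q : ℝ) → (q : ℝ) ≤ 1 → u (q : ℝ) = u (1 - (q : ℝ)) :=
  stmt4_general α u heq
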